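/- arXiv:2410.12884 — 5 statements merged into one kernel-verified Lean document; each statement's English description precedes it below -/
import Mathlib

section
/- An OWA mechanism with n ≥ 2 agents is strategy-proof if and only if there exists an index j with w_j = 1 (i.e., the mechanism is an order statistic). Strategy-proofness means: for every agent i, true peak x_i, misreport x'_i, and profile x_{-i} of other reports, |x_i − f(x_i, x_{-i})| ≤ |x_i − f(x'_i, x_{-i})|. -/
/-!
An order statistic is strategy-proof: if an agent's peak lies below the `j`-th smallest report,
changing its report can only move that order statistic up (the number of reports below it can
only drop), and symmetrically above.

Conversely, suppose `0 < w j < 1`. On the profiles `(0, …, 0, t, 1, …, 1)` with `t` in position `j`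
the OWA rule is the affine map `t ↦ w j * t + c`, `c = ∑ l > j, w l`. An agent with peak
`w j * s + c` gets exactly its peak by reporting `s`, whereas truthful reporting misses it unless
the peak is the fixed point of that map; one of `s = 0`, `s = 1` avoids the fixed point.
-/

noncomputable def owa {n : ℕ} (w x : Fin n → ℝ) : ℝ :=
  ∑ j, w j * x (Tuple.sort x j)

open Finset Function

lemma Finset.card_filter_perm_comp {ι : Type*} [Fintype ι] (p : ι → Prop) [DecidablePred p]
    (σ : Equiv.Perm ι) : #{i | p (σ i)} = #{i | p i} := by
  simp only [card_filter]
  exact Equiv.sum_comp σ (fun i => if p i then 1 else 0)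

lemma Finset.card_filter_update_le {ι α : Type*} [Fintype ι] [DecidableEq ι] (p : α → Prop)
    [DecidablePred p] (x : ι → α) (i : ι) (c : α) (h : p c → p (x i)) :
    #{l | p (update x i c l)} ≤ #{l | p (x l)} := by
  refine card_le_card fun l => ?_
  simp only [mem_filter, mem_univ, true_and, update_apply]
  split_ifs with hl
  · exact hl ▸ h
  · exact id

section OrderStatistic

variable {α : Type*} [LinearOrder α] {n : ℕ}

def orderStatistic (x : Fin n → α) (j : Fin n) : α := x (Tuple.sort x j)

theorem lt_card_le_iff_orderStatistic_le (x : Fin n → α) (j : Fin n) (a : α) :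
    j < #{l | x l ≤ a} ↔ orderStatistic x j ≤ a := by
  rw [← card_filter_perm_comp (x · ≤ a) (Tuple.sort x)]
  exact Tuple.lt_card_le_iff_apply_le_of_monotone (Tuple.monotone_sort x)

theorem lt_card_lt_iff_orderStatistic_lt (x : Fin n → α) (j : Fin n) (a : α) :
    j < #{l | x l < a} ↔ orderStatistic x j < a := by
  rw [← card_filter_perm_comp (x · < a) (Tuple.sort x)]
  exact Tuple.lt_card_lt_iff_apply_lt_of_monotone (Tuple.monotone_sort x)

variable {x : Fin n → α} {i j : Fin n}

theorem orderStatistic_le_update (h : x i < orderStatistic x j) (c : α) :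
    orderStatistic x j ≤ orderStatistic (update x i c) j := by
  set m := orderStatistic x j
  rw [← not_lt, ← lt_card_lt_iff_orderStatistic_lt, not_lt]
  calc #{l | update x i c l < m} ≤ #{l | x l < m} := card_filter_update_le (· < m) x i c fun _ => h
    _ ≤ j := by rw [← not_lt, lt_card_lt_iff_orderStatistic_lt]; exact lt_irrefl m

theorem update_orderStatistic_le (h : orderStatistic x j < x i) (c : α) :
    orderStatistic (update x i c) j ≤ orderStatistic x j := by
  set m := orderStatistic x j
  rw [← lt_card_le_iff_orderStatistic_le]
  calc (j : ℕ) < #{l | x l ≤ m} := (lt_card_le_iff_orderStatistic_le x j m).2 le_rfl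
    _ ≤ #{l | update x i c l ≤ m} := by
      simpa using card_filter_update_le (· ≤ m) (update x i c) i (x i)
        fun hle => absurd hle (not_le.2 h)

theorem abs_sub_orderStatistic_le_update {α : Type*} [AddCommGroup α] [LinearOrder α]
    [IsOrderedAddMonoid α] (x : Fin n → α) (i j : Fin n) (c : α) :
    |x i - orderStatistic x j| ≤ |x i - orderStatistic (update x i c) j| := by
  rcases lt_trichotomy (x i) (orderStatistic x j) with h | h | h
  · rw [abs_sub_comm, abs_sub_comm (x i), abs_of_pos (sub_pos.2 h),
      abs_of_pos (sub_pos.2 (h.trans_le (orderStatistic_le_update h c)))]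
    exact sub_le_sub_right (orderStatistic_le_update h c) _
  · simp [h]
  · rw [abs_of_pos (sub_pos.2 h),
      abs_of_pos (sub_pos.2 ((update_orderStatistic_le h c).trans_lt h))]
    exact sub_le_sub_left (update_orderStatistic_le h c) _

end OrderStatistic

section Owa

variable {n : ℕ} {w : Fin n → ℝ}

theorem owa_eq_orderStatistic (hw : ∀ j, 0 ≤ w j) (hsum : ∑ j, w j = 1) {j : Fin n}
    (hj : w j = 1) (x : Fin n → ℝ) : owa w x = orderStatistic x j := by
  have hrest : ∑ l ∈ univ.erase j, w l = 0 := by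
    linarith [add_sum_erase univ w (mem_univ j)]
  rw [sum_eq_zero_iff_of_nonneg fun l _ => hw l] at hrest
  rw [owa, sum_eq_single_of_mem j (mem_univ j) fun l _ hl => by
    rw [hrest l (mem_erase.2 ⟨hl, mem_univ l⟩), zero_mul], hj, one_mul]
  rfl

theorem owa_of_monotone {x : Fin n → ℝ} (hx : Monotone x) : owa w x = ∑ j, w j * x j := by
  rw [owa, Tuple.sort_eq_refl_iff_monotone.2 hx]
  rfl

def stepProfile (j : Fin n) (t : ℝ) : Fin n → ℝ :=
  update (fun l => if j < l then 1 else 0) j t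

theorem stepProfile_self (j : Fin n) (t : ℝ) : stepProfile j t j = t :=
  update_self ..

theorem update_stepProfile (j : Fin n) (t s : ℝ) :
    update (stepProfile j t) j s = stepProfile j s :=
  update_idem ..

variable {t : ℝ}

theorem stepProfile_mem_Icc (ht : t ∈ Set.Icc (0 : ℝ) 1) (j l : Fin n) :
    stepProfile j t l ∈ Set.Icc (0 : ℝ) 1 := by
  rw [stepProfile, update_apply]
  split_ifs <;> simp_all

theorem monotone_stepProfile (ht : t ∈ Set.Icc (0 : ℝ) 1) (j : Fin n) :
    Monotone (stepProfile j t) := by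
  intro a b hab
  simp only [stepProfile, update_apply]
  split_ifs <;> grind

theorem owa_stepProfile (ht : t ∈ Set.Icc (0 : ℝ) 1) (j : Fin n) :
    owa w (stepProfile j t) = w j * t + ∑ l ∈ Ioi j, w l := by
  rw [owa_of_monotone (monotone_stepProfile ht j), ← add_sum_erase univ _ (mem_univ j),
    stepProfile_self, stepProfile]
  congr 1
  rw [sum_congr rfl fun l hl => by rw [update_of_ne (ne_of_mem_erase hl)]]
  simp only [mul_ite, mul_one, mul_zero]
  rw [← sum_filter]
  congr 1
  ext l
  simp only [mem_filter, mem_erase, mem_univ, mem_Ioi]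
  grind

end Owa

theorem exists_abs_sub_affine_lt {a c : ℝ} (ha₀ : 0 < a) (ha₁ : a < 1) (hc : 0 ≤ c)
    (hac : a + c ≤ 1) :
    ∃ t ∈ Set.Icc (0 : ℝ) 1, ∃ s ∈ Set.Icc (0 : ℝ) 1, |t - (a * s + c)| < |t - (a * t + c)| := by
  obtain ⟨s, hs, hfix⟩ : ∃ s ∈ Set.Icc (0 : ℝ) 1, a * (a * s + c) + c ≠ a * s + c := by
    rcases hc.eq_or_lt with rfl | hc
    · exact ⟨1, by simp, by nlinarith⟩
    · exact ⟨0, by simp, by nlinarith⟩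
  refine ⟨a * s + c, ⟨by nlinarith [hs.1], by nlinarith [hs.2]⟩, s, hs, ?_⟩
  rw [sub_self, abs_zero, abs_pos, sub_ne_zero]
  exact hfix.symm

def IsStrategyProof {n : ℕ} (f : (Fin n → ℝ) → ℝ) : Prop :=
  ∀ x : Fin n → ℝ, (∀ j, x j ∈ Set.Icc (0 : ℝ) 1) →
    ∀ i : Fin n, ∀ xi' ∈ Set.Icc (0 : ℝ) 1, |x i - f x| ≤ |x i - f (update x i xi')|

theorem isStrategyProof_orderStatistic {n : ℕ} (j : Fin n) :
    IsStrategyProof (orderStatistic · j) :=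
  fun x _ i c _ => abs_sub_orderStatistic_le_update x i j c

theorem IsStrategyProof.exists_eq_one_of_owa {n : ℕ} {w : Fin n → ℝ}
    (hw : ∀ j, w j ∈ Set.Icc (0 : ℝ) 1) (hsum : ∑ j, w j = 1) (h : IsStrategyProof (owa w)) :
    ∃ j, w j = 1 := by
  by_contra! hne
  obtain ⟨j, -, hj₀⟩ : ∃ j ∈ univ, (0 : Fin n → ℝ) j < w j :=
    exists_lt_of_sum_lt (by simp [hsum])
  have hj₁ : w j < 1 := (hw j).2.lt_of_ne (hne j)
  have hc : 0 ≤ ∑ l ∈ Ioi j, w l := sum_nonneg fun l _ => (hw l).1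
  have hac : w j + ∑ l ∈ Ioi j, w l ≤ 1 := by
    rw [add_sum_Ioi_eq_sum_Ici, ← hsum]
    exact sum_le_univ_sum_of_nonneg fun l => (hw l).1
  obtain ⟨t, ht, s, hs, hlt⟩ := exists_abs_sub_affine_lt hj₀ hj₁ hc hac
  have hsp := h (stepProfile j t) (stepProfile_mem_Icc ht j) j s hs
  rw [update_stepProfile, stepProfile_self, owa_stepProfile ht, owa_stepProfile hs] at hsp
  exact hsp.not_gt hlt

theorem owa_strategyproof_iff_order_statistic_general {n : ℕ}
    (w : Fin n → ℝ) (hw : ∀ j, w j ∈ Set.Icc (0:ℝ) 1) (hsum : ∑ j, w j = 1) :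
    (∀ x : Fin n → ℝ, (∀ j, x j ∈ Set.Icc (0:ℝ) 1) →
      ∀ i : Fin n, ∀ xi' ∈ Set.Icc (0:ℝ) 1,
        |x i - owa w x| ≤ |x i - owa w (Function.update x i xi')|) ↔
      ∃ j, w j = 1 := by
  refine ⟨fun h => IsStrategyProof.exists_eq_one_of_owa hw hsum h, ?_⟩
  rintro ⟨j, hj⟩
  rw [show owa w = (orderStatistic · j) from funext (owa_eq_orderStatistic (hw · |>.1) hsum hj)]
  exact isStrategyProof_orderStatistic j

theorem owa_strategyproof_iff_order_statistic {n : ℕ} (hn : 2 ≤ n)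
    (w : Fin n → ℝ) (hw : ∀ j, w j ∈ Set.Icc (0:ℝ) 1) (hsum : ∑ j, w j = 1) :
    (∀ x : Fin n → ℝ, (∀ j, x j ∈ Set.Icc (0:ℝ) 1) →
      ∀ i : Fin n, ∀ xi' ∈ Set.Icc (0:ℝ) 1,
        |x i - owa w x| ≤ |x i - owa w (Function.update x i xi')|) ↔
      ∃ j, w j = 1 :=
  owa_strategyproof_iff_order_statistic_general w hw hsum
end

section
/- Any OWA mechanism with w_1 = w_n = 0 (and n ≥ 3) satisfies NOM-W: for every agent i, true peak x_i, and misreport x'_i, min_{x_{-i}} u(x_i, f(x_i, x_{-i})) ≥ min_{x_{-i}} u(x_i, f(x'_i, x_{-i})). In fact both sides equal min(x_i, 1 − x_i). -/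
/-- The set of utilities agent `i` with true peak `peak` can obtain, over all
profiles in `[0,1]^n` where agent `i` reports `rep`. -/
def utilSet {n : ℕ} (w : Fin n → ℝ) (i : Fin n) (peak rep : ℝ) : Set ℝ :=
  {u : ℝ | ∃ x : Fin n → ℝ, (∀ j, x j ∈ Set.Icc (0:ℝ) 1) ∧ x i = rep ∧
    u = 1 - |peak - owa w x|}

lemma owa_mem_Icc {n : ℕ} {w x : Fin n → ℝ} {a b : ℝ} (hw : ∀ j, 0 ≤ w j)
    (hsum : ∑ j, w j = 1) (hx : ∀ j, x j ∈ Set.Icc a b) :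
    owa w x ∈ Set.Icc a b := by
  have sum_mul_eq (t : ℝ) : ∑ j, w j * t = t := by rw [← Finset.sum_mul, hsum, one_mul]
  constructor
  · calc a = ∑ j, w j * a := (sum_mul_eq a).symm
      _ ≤ owa w x := Finset.sum_le_sum fun j _ =>
          mul_le_mul_of_nonneg_left (hx _).1 (hw j)
  · calc owa w x ≤ ∑ j, w j * b := Finset.sum_le_sum fun j _ =>
          mul_le_mul_of_nonneg_left (hx _).2 (hw j)
      _ = b := sum_mul_eq b

/-- If position `j` holds agent `i`, then positions `lo` and `hi` hold other agents, i.e. `c`, and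
monotonicity of the sorted profile squeezes the value at `j` to `c`. -/
lemma update_const_sort_eq {n : ℕ} (i : Fin n) (r c : ℝ) {lo j hi : Fin n}
    (hlo : lo < j) (hhi : j < hi) :
    Function.update (fun _ => c) i r (Tuple.sort (Function.update (fun _ => c) i r) j) = c := by
  set x := Function.update (fun _ => c) i r
  set σ := Tuple.sort x
  by_cases hj : σ j = i
  · have hmono : Monotone (x ∘ σ) := Tuple.monotone_sort x
    have hne (k : Fin n) (hk : k ≠ j) : x (σ k) = c :=
      Function.update_of_ne (fun h => hk (σ.injective (h.trans hj.symm))) _ _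
    exact le_antisymm (hne hi hhi.ne' ▸ hmono hhi.le) (hne lo hlo.ne ▸ hmono hlo.le)
  · exact Function.update_of_ne hj _ _

lemma owa_update_const {n : ℕ} (hn : 0 < n) (w : Fin n → ℝ) (hsum : ∑ j, w j = 1)
    (h0 : w ⟨0, hn⟩ = 0) (hlast : w ⟨n - 1, by omega⟩ = 0) (i : Fin n) (r c : ℝ) :
    owa w (Function.update (fun _ => c) i r) = c := by
  have hterm (j : Fin n) :
      w j * Function.update (fun _ => c) i r (Tuple.sort (Function.update (fun _ => c) i r) j) =
        w j * c := by
    by_cases hj0 : j = ⟨0, hn⟩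
    · rw [hj0, h0, zero_mul, zero_mul]
    by_cases hjl : j = ⟨n - 1, by omega⟩
    · rw [hjl, hlast, zero_mul, zero_mul]
    simp only [Fin.ext_iff] at hj0 hjl
    have hlo : (⟨0, hn⟩ : Fin n) < j := Fin.lt_def.mpr (show 0 < j.val by omega)
    have hhi : j < ⟨n - 1, by omega⟩ := Fin.lt_def.mpr (show j.val < n - 1 by omega)
    rw [update_const_sort_eq i r c hlo hhi]
  rw [owa, Finset.sum_congr rfl fun j _ => hterm j, ← Finset.sum_mul, hsum, one_mul]

lemma min_le_one_sub_abs_sub {p y : ℝ} (hy : y ∈ Set.Icc (0:ℝ) 1) :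
    min p (1 - p) ≤ 1 - |p - y| := by
  rcases abs_cases (p - y) with ⟨h, _⟩ | ⟨h, _⟩ <;>
    linarith [min_le_left p (1 - p), min_le_right p (1 - p), hy.1, hy.2]

lemma exists_one_sub_abs_sub_eq_min {p : ℝ} (hp : p ∈ Set.Icc (0:ℝ) 1) :
    ∃ c ∈ Set.Icc (0:ℝ) 1, 1 - |p - c| = min p (1 - p) := by
  rcases le_total p (1 - p) with h | h
  · exact ⟨1, by simp, by rw [min_eq_left h, abs_of_nonpos (by linarith [hp.2])]; ring⟩
  · exact ⟨0, by simp, by rw [min_eq_right h, sub_zero, abs_of_nonneg hp.1]⟩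

lemma isLeast_utilSet {n : ℕ} (hn : 0 < n) (w : Fin n → ℝ) (hw : ∀ j, 0 ≤ w j)
    (hsum : ∑ j, w j = 1) (h0 : w ⟨0, hn⟩ = 0) (hlast : w ⟨n - 1, by omega⟩ = 0)
    (i : Fin n) {peak rep : ℝ} (hpeak : peak ∈ Set.Icc (0:ℝ) 1) (hrep : rep ∈ Set.Icc (0:ℝ) 1) :
    IsLeast (utilSet w i peak rep) (min peak (1 - peak)) := by
  refine ⟨?_, ?_⟩
  · obtain ⟨c, hc, hc_eq⟩ := exists_one_sub_abs_sub_eq_min hpeak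
    refine ⟨Function.update (fun _ => c) i rep, fun j => ?_, Function.update_self _ _ _, ?_⟩
    · by_cases hj : j = i
      · rwa [hj, Function.update_self]
      · rwa [Function.update_of_ne hj]
    · rw [owa_update_const hn w hsum h0 hlast, hc_eq]
  · rintro u ⟨x, hx, -, rfl⟩
    exact min_le_one_sub_abs_sub (owa_mem_Icc hw hsum hx)

theorem owa_zero_extreme_weights_NOM_worst {n : ℕ} (hn : 3 ≤ n)
    (w : Fin n → ℝ) (hw : ∀ j, w j ∈ Set.Icc (0:ℝ) 1) (hsum : ∑ j, w j = 1)
    (h1 : w ⟨0, by omega⟩ = 0) (h2 : w ⟨n - 1, by omega⟩ = 0)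
    (i : Fin n) (xi : ℝ) (hxi : xi ∈ Set.Icc (0:ℝ) 1)
    (xi' : ℝ) (hxi' : xi' ∈ Set.Icc (0:ℝ) 1) :
    sInf (utilSet w i xi xi) = min xi (1 - xi) ∧
      sInf (utilSet w i xi xi') = min xi (1 - xi) ∧
      sInf (utilSet w i xi xi') ≤ sInf (utilSet w i xi xi) := by
  have worst {rep : ℝ} (hrep : rep ∈ Set.Icc (0:ℝ) 1) :
      sInf (utilSet w i xi rep) = min xi (1 - xi) :=
    (isLeast_utilSet (by omega) w (fun j => (hw j).1) hsum h1 h2 i hxi hrep).csInf_eq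
  exact ⟨worst hxi, worst hxi', (worst hxi').trans_le (worst hxi).ge⟩
end

section
/- An OWA mechanism (n ≥ 2) is not obviously manipulable (NOM) if and only if either (i) w_j = 1 for some index j, or (ii) w_1 = w_n = 0. NOM means that for each agent i, true peak x_i, and misreport x'_i, truth-telling is weakly better than misreporting both in the best case and in the worst case over the other agents' reports. -/
open Finset Function Set

section Weights

variable {ι : Type*} [Fintype ι] {w : ι → ℝ}

lemma add_le_sum_of_ne (hw : ∀ j, 0 ≤ w j) {j k : ι} (hjk : j ≠ k) :
    w j + w k ≤ ∑ i, w i := by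
  classical
  rw [← Finset.sum_pair hjk]
  exact Finset.sum_le_univ_sum_of_nonneg hw

lemma sum_mul_update_const [DecidableEq ι] (hsum : ∑ j, w j = 1) (c : ι) (t r : ℝ) :
    ∑ j, w j * update (fun _ => t) c r j = w c * r + (1 - w c) * t := by
  rw [← Finset.add_sum_erase _ _ (Finset.mem_univ c),
    Finset.sum_congr rfl fun j hj => by rw [update_of_ne (Finset.ne_of_mem_erase hj)],
    ← Finset.sum_mul, Finset.sum_erase_eq_sub (Finset.mem_univ c), hsum]
  simp

lemma eq_zero_of_eq_one (hw : ∀ j, 0 ≤ w j) (hsum : ∑ j, w j = 1) {j k : ι}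
    (hj : w j = 1) (hkj : k ≠ j) : w k = 0 := by
  linarith [add_le_sum_of_ne hw hkj, hw k]

lemma exists_eq_one_or_iff (hw : ∀ j, 0 ≤ w j) (hsum : ∑ j, w j = 1) (a b : ι) :
    ((∃ j, w j = 1) ∨ (w a = 0 ∧ w b = 0)) ↔ w b = 1 ∨ w a = 1 ∨ (w b = 0 ∧ w a = 0) := by
  constructor
  · rintro (⟨j, hj⟩ | ⟨ha, hb⟩)
    · by_cases hjb : j = b
      · exact Or.inl (hjb ▸ hj)
      by_cases hja : j = a
      · exact Or.inr (Or.inl (hja ▸ hj))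
      exact Or.inr (Or.inr ⟨eq_zero_of_eq_one hw hsum hj (Ne.symm hjb),
        eq_zero_of_eq_one hw hsum hj (Ne.symm hja)⟩)
    · exact Or.inr (Or.inr ⟨hb, ha⟩)
  · rintro (h | h | ⟨hb, ha⟩)
    · exact Or.inl ⟨b, h⟩
    · exact Or.inl ⟨a, h⟩
    · exact Or.inr ⟨ha, hb⟩

end Weights

lemma isLeast_image_one_sub_abs_Icc {p L H : ℝ} (hLH : L ≤ H) :
    IsLeast ((fun v => 1 - |p - v|) '' Icc L H) (1 - max |p - L| |p - H|) := by
  constructor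
  · rcases le_total |p - L| |p - H| with h | h
    · exact ⟨H, ⟨hLH, le_rfl⟩, by rw [max_eq_right h]⟩
    · exact ⟨L, ⟨le_rfl, hLH⟩, by rw [max_eq_left h]⟩
  · rintro _ ⟨v, hv, rfl⟩
    have := abs_le_max_abs_abs (sub_le_sub_left hv.2 p) (sub_le_sub_left hv.1 p)
    rw [max_comm] at this
    linarith

/-- One minus the worst-case utility of an agent with peak `x` reporting `r`, when the outcomes
that report can bring about form `[A r, 1 - B (1 - r)]`. -/
def worstLoss (A B x r : ℝ) : ℝ := max |x - A * r| |x - (1 - B * (1 - r))|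

lemma worstLoss_one_sub (A B x r : ℝ) : worstLoss B A (1 - x) (1 - r) = worstLoss A B x r := by
  rw [worstLoss, worstLoss, max_comm, abs_sub_comm x, show 1 - x - B * (1 - r) =
    -(x - (1 - B * (1 - r))) by ring, abs_neg, show 1 - x - (1 - A * (1 - (1 - r))) =
    A * r - x by ring]

section WorstLoss

variable {A B : ℝ}

lemma exists_worstLoss_lt (hA₀ : 0 < A) (hA₁ : A < 1) (B : ℝ) :
    ∃ x ∈ Icc (0 : ℝ) 1, ∃ r ∈ Icc (0 : ℝ) 1, worstLoss A B x r < worstLoss A B x x := by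
  refine ⟨(3 + A) / 4, ⟨by linarith, by linarith⟩, 1, ⟨zero_le_one, le_rfl⟩, ?_⟩
  have htruth : (1 - A) * ((3 + A) / 4) ≤ worstLoss A B ((3 + A) / 4) ((3 + A) / 4) := by
    refine le_max_of_le_left (le_of_eq ?_)
    rw [abs_of_nonneg (by nlinarith)]
    ring
  refine lt_of_lt_of_le (max_lt ?_ ?_) htruth
  · rw [abs_of_nonneg (by linarith)]
    nlinarith
  · rw [abs_of_nonpos (by linarith)]
    nlinarith

lemma worstLoss_self_le_iff (hA : 0 ≤ A) (hB : 0 ≤ B) (hAB : A + B ≤ 1) :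
    (∀ x ∈ Icc (0 : ℝ) 1, ∀ r ∈ Icc (0 : ℝ) 1, worstLoss A B x x ≤ worstLoss A B x r) ↔
      A = 1 ∨ B = 1 ∨ (A = 0 ∧ B = 0) := by
  constructor
  · intro h
    by_contra! hne
    obtain ⟨hA₁, hB₁, hzero⟩ := hne
    rcases hA.lt_or_eq with hA₀ | rfl
    · obtain ⟨x, hx, r, hr, hlt⟩ := exists_worstLoss_lt hA₀ (lt_of_le_of_ne (by linarith) hA₁) B
      exact (h x hx r hr).not_gt hlt
    · obtain ⟨x, hx, r, hr, hlt⟩ :=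
        exists_worstLoss_lt (hB.lt_of_ne (hzero rfl).symm) (lt_of_le_of_ne (by linarith) hB₁) 0
      rw [← worstLoss_one_sub B 0 x r, ← worstLoss_one_sub B 0 x x] at hlt
      exact (h (1 - x) ⟨by linarith [hx.2], by linarith [hx.1]⟩ (1 - r)
        ⟨by linarith [hr.2], by linarith [hr.1]⟩).not_gt hlt
  · rintro (rfl | rfl | ⟨rfl, rfl⟩) x _ r _
    · obtain rfl : B = 0 := by linarith
      simp [worstLoss]
    · obtain rfl : A = 0 := by linarith
      simp [worstLoss]
    · simp [worstLoss]

end WorstLoss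

lemma owa_eq_of_monotone {n : ℕ} (w x : Fin n → ℝ) {σ : Equiv.Perm (Fin n)}
    (h : Monotone (x ∘ σ)) : owa w x = ∑ j, w j * x (σ j) := by
  have hsort := Tuple.comp_sort_eq_comp_iff_monotone.2 h
  exact Finset.sum_congr rfl fun j _ => congrArg (w j * ·) (congrFun hsort j).symm

lemma owa_update_const_of_monotone {n : ℕ} {w : Fin n → ℝ} (hsum : ∑ j, w j = 1)
    (i c : Fin n) {t r : ℝ} (h : Monotone (update (fun _ => t) c r)) :
    owa w (update (fun _ => t) i r) = w c * r + (1 - w c) * t := by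
  have hswap : update (fun _ => t) i r ∘ Equiv.swap i c = update (fun _ => t) c r := by
    rw [update_comp_equiv, Equiv.symm_swap, Equiv.swap_apply_left]
    rfl
  rw [owa_eq_of_monotone w _ (hswap ▸ h), ← sum_mul_update_const hsum c t r, ← hswap]
  rfl

lemma one_mem_upperBounds_utilSet {n : ℕ} (w : Fin n → ℝ) (i : Fin n) (p r : ℝ) :
    1 ∈ upperBounds (utilSet w i p r) := by
  rintro _ ⟨x, -, -, rfl⟩
  linarith [abs_nonneg (p - owa w x)]

section LastIndex

variable {m : ℕ}

lemma monotone_update_const_last {t r : ℝ} (h : t ≤ r) :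
    Monotone (update (fun _ : Fin (m + 1) => t) (Fin.last m) r) := by
  intro j k hjk
  rcases eq_or_ne k (Fin.last m) with rfl | hk
  · rcases eq_or_ne j (Fin.last m) with rfl | hj <;> simp [*]
  · have hj : j ≠ Fin.last m := fun hj => hk (Fin.last_le_iff.1 (hj ▸ hjk))
    simp [hj, hk]

lemma monotone_update_const_zero {t r : ℝ} (h : r ≤ t) :
    Monotone (update (fun _ : Fin (m + 1) => t) 0 r) := by
  intro j k hjk
  rcases eq_or_ne j 0 with rfl | hj
  · rcases eq_or_ne k 0 with rfl | hk <;> simp [*]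
  · have hk : k ≠ 0 := fun hk => hj (Fin.le_zero_iff.1 (hk ▸ hjk))
    simp [hj, hk]

variable {w : Fin (m + 1) → ℝ}

lemma owa_update_const_s10 (hsum : ∑ j, w j = 1) (i : Fin (m + 1)) (t r : ℝ) :
    owa w (update (fun _ => t) i r) =
      w (Fin.last m) * r + (1 - w (Fin.last m)) * min t r + (1 - w 0) * (max t r - r) := by
  rcases le_total t r with h | h
  · rw [owa_update_const_of_monotone hsum i _ (monotone_update_const_last h), min_eq_left h,
      max_eq_right h]
    ring
  · rw [owa_update_const_of_monotone hsum i _ (monotone_update_const_zero h), min_eq_right h,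
      max_eq_left h]
    ring

lemma owa_mem_Icc_s10 (hw : ∀ j, 0 ≤ w j) (hsum : ∑ j, w j = 1) {x : Fin (m + 1) → ℝ}
    (hx : ∀ j, x j ∈ Icc (0 : ℝ) 1) (i : Fin (m + 1)) :
    owa w x ∈ Icc (w (Fin.last m) * x i) (1 - w 0 * (1 - x i)) := by
  set y := x ∘ Tuple.sort x
  have hy : Monotone y := Tuple.monotone_sort x
  have hxi : x i = y ((Tuple.sort x).symm i) := by simp [y]
  have hterm : ∀ (z : Fin (m + 1) → ℝ), (∀ j, 0 ≤ z j) → ∀ k, w k * z k ≤ ∑ j, w j * z j :=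
    fun z hz k => Finset.single_le_sum (fun j _ => mul_nonneg (hw j) (hz j)) (Finset.mem_univ k)
  have hcompl : ∑ j, w j * (1 - y j) = 1 - owa w x := by
    simp only [mul_sub, mul_one, Finset.sum_sub_distrib, hsum]
    rfl
  constructor
  · calc w (Fin.last m) * x i ≤ w (Fin.last m) * y (Fin.last m) :=
          mul_le_mul_of_nonneg_left (hxi ▸ hy (Fin.le_last _)) (hw _)
      _ ≤ owa w x := hterm y (fun j => (hx _).1) _
  · have hfirst : w 0 * (1 - x i) ≤ w 0 * (1 - y 0) :=
      mul_le_mul_of_nonneg_left (by linarith [hxi ▸ hy (Fin.zero_le _)]) (hw 0)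
    linarith [hterm (fun j => 1 - y j) (fun j => sub_nonneg.2 (hx _).2) 0]

lemma exists_owa_eq (hsum : ∑ j, w j = 1) (i : Fin (m + 1)) {r : ℝ} (hr : r ∈ Icc (0 : ℝ) 1)
    {v : ℝ} (hv : v ∈ Icc (w (Fin.last m) * r) (1 - w 0 * (1 - r))) :
    ∃ x : Fin (m + 1) → ℝ, (∀ j, x j ∈ Icc (0 : ℝ) 1) ∧ x i = r ∧ owa w x = v := by
  have hcont : Continuous fun t => owa w (update (fun _ => t) i r) := by
    simp only [owa_update_const_s10 hsum]
    fun_prop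
  have hends : Icc (w (Fin.last m) * r) (1 - w 0 * (1 - r)) =
      Icc (owa w (update (fun _ => 0) i r)) (owa w (update (fun _ => 1) i r)) := by
    simp only [owa_update_const_s10 hsum, min_eq_left hr.1, max_eq_right hr.1, min_eq_right hr.2,
      max_eq_left hr.2]
    ring_nf
  obtain ⟨t, ht, rfl⟩ := intermediate_value_Icc zero_le_one hcont.continuousOn (hends ▸ hv)
  refine ⟨update (fun _ => t) i r, fun j => ?_, by simp, rfl⟩
  rcases eq_or_ne j i with rfl | hj <;> simp [*]

lemma nonempty_Icc_owa (hw : ∀ j, 0 ≤ w j) (hsum : ∑ j, w j = 1) {r : ℝ}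
    (hr : r ∈ Icc (0 : ℝ) 1) : (Icc (w (Fin.last m) * r) (1 - w 0 * (1 - r))).Nonempty :=
  ⟨_, owa_mem_Icc_s10 hw hsum (x := fun _ => r) (fun _ => hr) 0⟩

lemma utilSet_eq_image (hw : ∀ j, 0 ≤ w j) (hsum : ∑ j, w j = 1) (i : Fin (m + 1)) (p : ℝ)
    {r : ℝ} (hr : r ∈ Icc (0 : ℝ) 1) :
    utilSet w i p r = (fun v => 1 - |p - v|) '' Icc (w (Fin.last m) * r) (1 - w 0 * (1 - r)) := by
  ext u
  constructor
  · rintro ⟨x, hx, rfl, rfl⟩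
    exact ⟨owa w x, owa_mem_Icc_s10 hw hsum hx i, rfl⟩
  · rintro ⟨v, hv, rfl⟩
    obtain ⟨x, hx, hxi, rfl⟩ := exists_owa_eq hsum i hr hv
    exact ⟨x, hx, hxi, rfl⟩

lemma sInf_utilSet (hw : ∀ j, 0 ≤ w j) (hsum : ∑ j, w j = 1) (i : Fin (m + 1)) (p : ℝ) {r : ℝ}
    (hr : r ∈ Icc (0 : ℝ) 1) :
    sInf (utilSet w i p r) = 1 - worstLoss (w (Fin.last m)) (w 0) p r := by
  rw [utilSet_eq_image hw hsum i p hr]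
  exact (isLeast_image_one_sub_abs_Icc (nonempty_Icc.1 (nonempty_Icc_owa hw hsum hr))).csInf_eq

lemma sSup_utilSet_le_sSup_utilSet_self (hw : ∀ j, 0 ≤ w j) (hsum : ∑ j, w j = 1)
    (i : Fin (m + 1)) {p r : ℝ} (hp : p ∈ Icc (0 : ℝ) 1) (hr : r ∈ Icc (0 : ℝ) 1) :
    sSup (utilSet w i p r) ≤ sSup (utilSet w i p p) := by
  have hle : ∀ j, w j ≤ 1 := fun j =>
    hsum ▸ Finset.single_le_sum (fun k _ => hw k) (Finset.mem_univ j)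
  have hp_mem : p ∈ Icc (w (Fin.last m) * p) (1 - w 0 * (1 - p)) :=
    ⟨mul_le_of_le_one_left hp.1 (hle _),
      by nlinarith [mul_le_of_le_one_left (sub_nonneg.2 hp.2) (hle 0)]⟩
  obtain ⟨x, hx, hxi, hxp⟩ := exists_owa_eq hsum i hp hp_mem
  have hone : 1 ∈ utilSet w i p p := ⟨x, hx, hxi, by simp [hxp]⟩
  rw [(IsGreatest.csSup_eq ⟨hone, one_mem_upperBounds_utilSet w i p p⟩)]
  refine csSup_le ?_ (one_mem_upperBounds_utilSet w i p r)
  rw [utilSet_eq_image hw hsum i p hr]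
  exact (nonempty_Icc_owa hw hsum hr).image _

lemma notObviouslyManipulable_iff_worstLoss_le (hw : ∀ j, 0 ≤ w j) (hsum : ∑ j, w j = 1)
    (i : Fin (m + 1)) {x r : ℝ} (hx : x ∈ Icc (0 : ℝ) 1) (hr : r ∈ Icc (0 : ℝ) 1) :
    (sSup (utilSet w i x r) ≤ sSup (utilSet w i x x) ∧
        sInf (utilSet w i x r) ≤ sInf (utilSet w i x x)) ↔
      worstLoss (w (Fin.last m)) (w 0) x x ≤ worstLoss (w (Fin.last m)) (w 0) x r := by
  rw [sInf_utilSet hw hsum i x hr, sInf_utilSet hw hsum i x hx, sub_le_sub_iff_left,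
    and_iff_right (sSup_utilSet_le_sSup_utilSet_self hw hsum i hx hr)]

end LastIndex

theorem owa_NOM_iff {n : ℕ} (hn : 2 ≤ n)
    (w : Fin n → ℝ) (hw : ∀ j, w j ∈ Set.Icc (0:ℝ) 1) (hsum : ∑ j, w j = 1) :
    (∀ i : Fin n, ∀ xi ∈ Set.Icc (0:ℝ) 1, ∀ xi' ∈ Set.Icc (0:ℝ) 1,
        sSup (utilSet w i xi xi') ≤ sSup (utilSet w i xi xi) ∧
        sInf (utilSet w i xi xi') ≤ sInf (utilSet w i xi xi)) ↔
      ((∃ j, w j = 1) ∨ (w ⟨0, by omega⟩ = 0 ∧ w ⟨n - 1, by omega⟩ = 0)) := by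
  obtain ⟨m, rfl⟩ : ∃ m, n = m + 1 := ⟨n - 1, by omega⟩
  have hw₀ : ∀ j, 0 ≤ w j := fun j => (hw j).1
  have hne : (0 : Fin (m + 1)) ≠ Fin.last m := by
    rw [Ne, Fin.ext_iff]
    simp only [Fin.val_zero, Fin.val_last]
    omega
  have hAB : w (Fin.last m) + w 0 ≤ 1 := hsum ▸ add_le_sum_of_ne hw₀ hne.symm
  change _ ↔ (∃ j, w j = 1) ∨ (w 0 = 0 ∧ w (Fin.last m) = 0)
  rw [exists_eq_one_or_iff hw₀ hsum 0 (Fin.last m), ← worstLoss_self_le_iff (hw₀ _) (hw₀ _) hAB]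
  exact ⟨fun h x hx r hr =>
      (notObviouslyManipulable_iff_worstLoss_le hw₀ hsum 0 hx hr).1 (h 0 x hx r hr),
    fun h i x hx r hr => (notObviouslyManipulable_iff_worstLoss_le hw₀ hsum i hx hr).2 (h x hx r hr)⟩
end

section
/- An OWA mechanism satisfies IFS if and only if w_1 ≥ 1/n and w_n ≥ 1/n. IFS requires that for every profile x ∈ [0,1]^n and every agent i, |x_i − f(x)| ≤ 1 − 1/n. -/
open Finset

section SortedTuple

variable {α : Type*} [LinearOrder α] {n : ℕ} {x : Fin n → α}

lemma sort_apply_le_of_isBot {b : Fin n} (hb : IsBot b) (i : Fin n) :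
    x (Tuple.sort x b) ≤ x i := by
  simpa using Tuple.monotone_sort x (hb ((Tuple.sort x).symm i))

lemma le_sort_apply_of_isTop {t : Fin n} (ht : IsTop t) (i : Fin n) :
    x i ≤ x (Tuple.sort x t) := by
  simpa using Tuple.monotone_sort x (ht ((Tuple.sort x).symm i))

lemma sort_eq_of_isBot_of_forall_lt {b p : Fin n} (hb : IsBot b)
    (hp : ∀ j ≠ p, x p < x j) : Tuple.sort x b = p := by
  by_contra h
  exact (hp _ h).not_ge (sort_apply_le_of_isBot hb p)

lemma sort_eq_of_isTop_of_forall_lt {t p : Fin n} (ht : IsTop t)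
    (hp : ∀ j ≠ p, x j < x p) : Tuple.sort x t = p := by
  by_contra h
  exact (hp _ h).not_ge (le_sort_apply_of_isTop ht p)

end SortedTuple

section Owa

variable {n : ℕ} {w x : Fin n → ℝ}

lemma owa_update_const_s13 (c a : ℝ) {p k : Fin n}
    (hk : Tuple.sort (Function.update (fun _ => c) p a) k = p) :
    owa w (Function.update (fun _ => c) p a) = c * ∑ j, w j + (a - c) * w k := by
  rw [owa]
  set σ := Tuple.sort (Function.update (fun _ => c) p a)
  have hσ : ∀ j, Function.update (fun _ => c) p a (σ j) = c + if j = k then a - c else 0 := by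
    intro j
    rcases eq_or_ne j k with rfl | hj
    · rw [hk, Function.update_self, if_pos rfl]; ring
    · have : σ j ≠ p := fun h => hj (σ.injective (h.trans hk.symm))
      rw [Function.update_of_ne this, if_neg hj, add_zero]
  simp only [hσ, mul_add, mul_ite, mul_zero, sum_add_distrib, sum_ite_eq', mem_univ,
    if_true, ← sum_mul]
  ring

lemma mul_sort_le_owa (hw : ∀ j, 0 ≤ w j) (hx : ∀ j, 0 ≤ x j) (j : Fin n) :
    w j * x (Tuple.sort x j) ≤ owa w x :=
  single_le_sum (f := fun j => w j * x (Tuple.sort x j))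
    (fun j _ => mul_nonneg (hw j) (hx _)) (mem_univ j)

lemma owa_le_mul_sort_add (hw : ∀ j, 0 ≤ w j) (hx : ∀ j, x j ≤ 1) (j : Fin n) :
    owa w x ≤ w j * x (Tuple.sort x j) + (∑ k, w k - w j) := by
  rw [owa, ← add_sum_erase _ _ (mem_univ j), ← sum_erase_eq_sub (mem_univ j)]
  gcongr with k
  exact mul_le_of_le_one_right (hw k) (hx _)

lemma sub_owa_le (hw : ∀ j, w j ∈ Set.Icc (0 : ℝ) 1) (hx : ∀ j, x j ∈ Set.Icc (0 : ℝ) 1)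
    {t : Fin n} (ht : IsTop t) (i : Fin n) : x i - owa w x ≤ 1 - w t := by
  have hmax := le_sort_apply_of_isTop (x := x) ht i
  have hlow := mul_sort_le_owa (fun j => (hw j).1) (fun j => (hx j).1) t
  nlinarith [(hw t).2, (hx (Tuple.sort x t)).2]

lemma owa_sub_le (hw : ∀ j, w j ∈ Set.Icc (0 : ℝ) 1) (hsum : ∑ j, w j = 1)
    (hx : ∀ j, x j ∈ Set.Icc (0 : ℝ) 1) {b : Fin n} (hb : IsBot b) (i : Fin n) :
    owa w x - x i ≤ 1 - w b := by
  have hmin := sort_apply_le_of_isBot (x := x) hb i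
  have hup := owa_le_mul_sort_add (fun j => (hw j).1) (fun j => (hx j).2) b
  rw [hsum] at hup
  nlinarith [(hw b).2, (hx (Tuple.sort x b)).1]

end Owa

theorem owa_IFS_iff {n : ℕ} (hn : 1 ≤ n)
    (w : Fin n → ℝ) (hw : ∀ j, w j ∈ Set.Icc (0:ℝ) 1) (hsum : ∑ j, w j = 1) :
    (∀ x : Fin n → ℝ, (∀ j, x j ∈ Set.Icc (0:ℝ) 1) →
        ∀ i : Fin n, |x i - owa w x| ≤ 1 - 1 / n) ↔
      (1 / (n:ℝ) ≤ w ⟨0, by omega⟩ ∧ 1 / (n:ℝ) ≤ w ⟨n - 1, by omega⟩) := by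
  set b : Fin n := ⟨0, by omega⟩
  set t : Fin n := ⟨n - 1, by omega⟩
  have hb : IsBot b := fun j => Fin.mk_le_of_le_val (Nat.zero_le _)
  have ht : IsTop t := fun j => Fin.mk_le_mk.mpr (by omega)
  have hmem : ∀ c a : ℝ, c ∈ Set.Icc (0 : ℝ) 1 → a ∈ Set.Icc (0 : ℝ) 1 →
      ∀ j, Function.update (fun _ => c) b a j ∈ Set.Icc (0 : ℝ) 1 := by
    intro c a hc ha j
    rw [Function.update_apply]
    split_ifs <;> assumption
  constructor
  · intro h
    have hlow := h _ (hmem 1 0 (by norm_num) (by norm_num)) b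
    rw [Function.update_self, owa_update_const_s13 1 0 (sort_eq_of_isBot_of_forall_lt hb
      fun j hj => by simp [Function.update_of_ne hj]), hsum, abs_le] at hlow
    have hhigh := h _ (hmem 0 1 (by norm_num) (by norm_num)) b
    rw [Function.update_self, owa_update_const_s13 0 1 (sort_eq_of_isTop_of_forall_lt ht
      fun j hj => by simp [Function.update_of_ne hj]), abs_le] at hhigh
    constructor <;> linarith [hlow.1, hhigh.2]
  · rintro ⟨hwb, hwt⟩ x hx i
    rw [abs_sub_le_iff]
    exact ⟨(sub_owa_le hw hx ht i).trans (by linarith),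
      (owa_sub_le hw hsum hx hb i).trans (by linarith)⟩
end

section
/- The standard average mechanism f(x) = (1/n) ∑_i x_i satisfies proportional fairness: for every profile x ∈ [0,1]^n, every coalition S ⊆ N, and every agent i ∈ S, |x_i − f(x)| ≤ 1 − |S|/n + r, where r = max_{j∈S} x_j − min_{j∈S} x_j. -/
/-!
Writing `x i - mean x` as the average of the differences `x i - x j`, each difference is at most
the diameter `r` of the coalition's reports when `j ∈ S`, and at most `1` otherwise. Hence
`|x i - mean x| ≤ (|S| r + (n - |S|)) / n = 1 - |S|/n + (|S|/n) r ≤ 1 - |S|/n + r`.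
-/

open Finset

theorem Finset.abs_sub_le_sup'_sub_inf' {ι α : Type*} [AddCommGroup α] [LinearOrder α]
    [IsOrderedAddMonoid α] {s : Finset ι} (hs : s.Nonempty) (f : ι → α) {i j : ι}
    (hi : i ∈ s) (hj : j ∈ s) : |f i - f j| ≤ s.sup' hs f - s.inf' hs f :=
  abs_sub_le_of_le_of_le (inf'_le f hi) (le_sup' f hi) (inf'_le f hj) (le_sup' f hj)

theorem Finset.sum_le_card_nsmul_add_card_compl_nsmul {ι M : Type*} [Fintype ι] [DecidableEq ι]
    [AddCommMonoid M] [Preorder M] [AddLeftMono M] (s : Finset ι) (f : ι → M) (a b : M)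
    (ha : ∀ j ∈ s, f j ≤ a) (hb : ∀ j ∉ s, f j ≤ b) :
    ∑ j, f j ≤ #s • a + #sᶜ • b := by
  rw [← sum_add_sum_compl s f]
  exact add_le_add (sum_le_card_nsmul s f a ha)
    (sum_le_card_nsmul sᶜ f b fun j hj ↦ hb j (mem_compl.mp hj))

theorem sub_sum_div_card {ι : Type*} [Fintype ι] (x : ι → ℝ) (i : ι) :
    x i - (∑ j, x j) / Fintype.card ι = (∑ j, (x i - x j)) / Fintype.card ι := by
  have hn : (Fintype.card ι : ℝ) ≠ 0 := Nat.cast_ne_zero.mpr (Fintype.card_pos_iff.mpr ⟨i⟩).ne'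
  rw [sum_sub_distrib, sum_const, card_univ, nsmul_eq_mul]
  field_simp

theorem abs_sub_mean_le_of_mem_Icc {ι : Type*} [Fintype ι] (x : ι → ℝ)
    (hx : ∀ j, x j ∈ Set.Icc (0 : ℝ) 1) (S : Finset ι) (hS : S.Nonempty) {i : ι} (hi : i ∈ S) :
    |x i - (∑ j, x j) / Fintype.card ι| ≤
      1 - (#S : ℝ) / Fintype.card ι + (S.sup' hS x - S.inf' hS x) := by
  classical
  set n : ℝ := (Fintype.card ι : ℝ)
  set r := S.sup' hS x - S.inf' hS x
  have hn : 0 < n := Nat.cast_pos.mpr (Fintype.card_pos_iff.mpr ⟨i⟩)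
  have hr : 0 ≤ r := (abs_nonneg _).trans (S.abs_sub_le_sup'_sub_inf' hS x hi hi)
  have hSn : (#S : ℝ) ≤ n := Nat.cast_le.mpr (card_le_univ S)
  have hcompl : (#Sᶜ : ℝ) = n - #S := by
    rw [card_compl, Nat.cast_sub (card_le_univ S)]
  have hsum : ∑ j, |x i - x j| ≤ #S * r + (n - #S) := by
    have := S.sum_le_card_nsmul_add_card_compl_nsmul (fun j ↦ |x i - x j|) r 1
      (fun j hj ↦ S.abs_sub_le_sup'_sub_inf' hS x hi hj)
      (fun j _ ↦ abs_sub_le_of_nonneg_of_le (hx i).1 (hx i).2 (hx j).1 (hx j).2)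
    simpa [nsmul_eq_mul, hcompl] using this
  calc |x i - (∑ j, x j) / n|
      = |∑ j, (x i - x j)| / n := by rw [sub_sum_div_card, abs_div, abs_of_pos hn]
    _ ≤ (∑ j, |x i - x j|) / n := by gcongr; exact abs_sum_le_sum_abs _ _
    _ ≤ (#S * r + (n - #S)) / n := by gcongr
    _ = 1 - #S / n + #S / n * r := by field_simp; ring
    _ ≤ 1 - #S / n + r := by
      gcongr
      exact mul_le_of_le_one_left hr ((div_le_one hn).mpr hSn)

theorem average_proportional_fairness_general {n : ℕ}
    (x : Fin n → ℝ) (hx : ∀ j, x j ∈ Set.Icc (0:ℝ) 1)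
    (S : Finset (Fin n)) (hS : S.Nonempty) (i : Fin n) (hi : i ∈ S) :
    |x i - (∑ j, x j) / n| ≤ 1 - (S.card : ℝ) / n + (S.sup' hS x - S.inf' hS x) := by
  simpa using abs_sub_mean_le_of_mem_Icc x hx S hS hi

theorem average_proportional_fairness {n : ℕ} (hn : 0 < n)
    (x : Fin n → ℝ) (hx : ∀ j, x j ∈ Set.Icc (0:ℝ) 1)
    (S : Finset (Fin n)) (hS : S.Nonempty) (i : Fin n) (hi : i ∈ S) :
    |x i - (∑ j, x j) / n| ≤ 1 - (S.card : ℝ) / n + (S.sup' hS x - S.inf' hS x) :=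
  average_proportional_fairness_general x hx S hS i hi
end
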